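/- arXiv:1608.08087 — 5 statements merged into one kernel-verified Lean document; each statement's English description precedes it below -/
import Mathlib

section
/- The rotation angle 6·arg(-1 + (1-2q)√3·i) is a multiple of 2π if and only if q = 0, q = 1/2, or q = 1. Equivalently, the complex number (-1 + (1-2q)√3·i)^6 is a positive real multiple of | -1 + (1-2q)√3·i |^6 exactly for these q. -/
/-!
A complex number `z` satisfies `z ^ 6 = |z| ^ 6` exactly when `z ^ 3` is real, since `w ^ 2 = |w| ^ 2`
holds only for real `w`. For `z = zq q` a direct expansion gives
`Im (z ^ 3) = 12 √3 q (1 - 2q) (1 - q)`, which vanishes exactly at `q = 0, 1/2, 1`.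
-/

open Complex Real

/-- The complex number whose argument (times 6) gives the rotation angle of `T_q`. -/
noncomputable def zq (q : ℝ) : ℂ := -1 + ((1 - 2 * q : ℝ) : ℂ) * (Real.sqrt 3 : ℂ) * Complex.I

theorem Complex.sq_eq_norm_sq_iff_im_eq_zero (w : ℂ) :
    w ^ 2 = ((‖w‖ ^ 2 : ℝ) : ℂ) ↔ w.im = 0 := by
  rw [← normSq_eq_norm_sq, Complex.ext_iff]
  simp only [sq, mul_re, mul_im, ofReal_re, ofReal_im, normSq_apply]
  constructor
  · rintro ⟨hre, -⟩
    nlinarith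
  · intro h
    simp [h]

lemma zq_pow_three_im (q : ℝ) : (zq q ^ 3).im = 12 * √3 * q * (1 - 2 * q) * (1 - q) := by
  have hs : √3 ^ 2 = 3 := Real.sq_sqrt (by norm_num)
  simp only [zq, pow_succ, pow_zero, one_mul, mul_re, mul_im, add_re, add_im, neg_re, neg_im,
    one_re, one_im, ofReal_re, ofReal_im, I_re, I_im]
  linear_combination -(1 - 2 * q) ^ 3 * √3 * hs

theorem stmt1 (q : ℝ) :
    (zq q) ^ 6 = ((‖zq q‖) ^ 6 : ℝ) ↔ q = 0 ∨ q = 1 / 2 ∨ q = 1 := by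
  have hpow : zq q ^ 6 = (zq q ^ 3) ^ 2 := by ring
  have hnorm : ‖zq q‖ ^ 6 = ‖zq q ^ 3‖ ^ 2 := by rw [norm_pow]; ring
  rw [hpow, hnorm, Complex.sq_eq_norm_sq_iff_im_eq_zero, zq_pow_three_im]
  have hc : (12 * √3 : ℝ) ≠ 0 := by positivity
  simp only [mul_eq_zero, hc, false_or, sub_eq_zero, or_assoc]
  grind
end

section
/- For real numbers q, q', the complex numbers z_q = -1 + (1-2q)√3·i and z_{q'} = -1 + (1-2q')√3·i satisfy (z_q/|z_q|)^6 = (z_{q'}/|z_{q'}|)^6 (i.e. T_q = T_{q'}) if and only if q' = q, or q' = (2q-1)/(3q-1) (when q ≠ 1/3), or q' = (q-1)/(3q-2) (when q ≠ 2/3). -/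
/-!
Writing `‖v‖ ^ 2 = v * conj v`, the equation `(u / ‖u‖) ^ 6 = (v / ‖v‖) ^ 6` becomes
`(u * conj v) ^ 3 * (u * v) ^ 3 = (v * conj u) ^ 3 * (u * v) ^ 3`, i.e. `(u * conj v) ^ 3` is real.
For `u = zq q`, `v = zq q'` the imaginary part of that cube is an explicit cubic polynomial
`96 √3 (q - q') (q' (3q - 1) - (2q - 1)) (q' (3q - 2) - (q - 1))`, whose three factors give the
three alternatives.
-/

open Complex Real

open ComplexConjugate

namespace Complex

theorem im_pow_three (w : ℂ) : (w ^ 3).im = 3 * w.re ^ 2 * w.im - w.im ^ 3 := by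
  simp only [pow_succ, pow_zero, one_mul, mul_im, mul_re]
  ring

theorem div_norm_pow_two_mul_eq_iff {u v : ℂ} (hu : u ≠ 0) (hv : v ≠ 0) (n : ℕ) :
    (u / (‖u‖ : ℂ)) ^ (2 * n) = (v / (‖v‖ : ℂ)) ^ (2 * n) ↔ ((u * conj v) ^ n).im = 0 := by
  have hnorm : ∀ z : ℂ, z ≠ 0 → (‖z‖ : ℂ) ^ (2 * n) ≠ 0 := fun z hz =>
    pow_ne_zero _ (ofReal_ne_zero.2 (norm_ne_zero_iff.2 hz))
  have hsq : ∀ z : ℂ, (‖z‖ : ℂ) ^ (2 * n) = (z * conj z) ^ n := fun z => by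
    rw [mul_conj', pow_mul]
  have hsplit : ∀ a b : ℂ, a ^ (2 * n) * (b * conj b) ^ n = (a * conj b) ^ n * (a * b) ^ n :=
    fun a b => by ring
  have huv : (u * v) ^ n ≠ 0 := pow_ne_zero _ (mul_ne_zero hu hv)
  rw [div_pow, div_pow, div_eq_div_iff (hnorm u hu) (hnorm v hv), hsq, hsq, hsplit,
    hsplit, mul_comm v u, mul_left_inj' huv, ← conj_eq_iff_im, map_pow, map_mul, conj_conj,
    mul_comm (conj u) v, eq_comm]

end Complex

theorem mul_eq_iff_ne_zero_and_eq_div {K : Type*} [Field K] {x c d : K} (h : d = 0 → c ≠ 0) :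
    x * d = c ↔ d ≠ 0 ∧ x = c / d := by
  constructor
  · intro hx
    have hd : d ≠ 0 := fun hd => h hd (by rw [← hx, hd, mul_zero])
    exact ⟨hd, (eq_div_iff hd).2 hx⟩
  · rintro ⟨hd, rfl⟩
    exact div_mul_cancel₀ c hd

theorem zq_re (q : ℝ) : (zq q).re = -1 := by simp [zq]

theorem zq_im (q : ℝ) : (zq q).im = (1 - 2 * q) * √3 := by simp [zq]

theorem zq_ne_zero (q : ℝ) : zq q ≠ 0 := fun h => by
  simpa [zq_re] using congrArg re h

theorem im_zq_mul_conj_zq_pow_three (q q' : ℝ) :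
    ((zq q * conj (zq q')) ^ 3).im =
      96 * √3 * ((q - q') * (q' * (3 * q - 1) - (2 * q - 1)) * (q' * (3 * q - 2) - (q - 1))) := by
  have hs : √3 ^ 2 = 3 := Real.sq_sqrt (by norm_num)
  have hre : (zq q * conj (zq q')).re = 4 - 6 * q - 6 * q' + 12 * q * q' := by
    rw [mul_re, conj_re, conj_im, zq_re, zq_re, zq_im, zq_im]
    linear_combination (1 - 2 * q) * (1 - 2 * q') * hs
  have him : (zq q * conj (zq q')).im = 2 * (q - q') * √3 := by
    rw [mul_im, conj_re, conj_im, zq_re, zq_re, zq_im, zq_im]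
    ring
  rw [im_pow_three, hre, him]
  linear_combination -8 * (q - q') ^ 3 * √3 * hs

theorem stmt3 (q q' : ℝ) :
    (zq q / (‖zq q‖ : ℝ)) ^ 6 = (zq q' / (‖zq q'‖ : ℝ)) ^ 6 ↔
      q' = q ∨ (q ≠ 1 / 3 ∧ q' = (2 * q - 1) / (3 * q - 1)) ∨
        (q ≠ 2 / 3 ∧ q' = (q - 1) / (3 * q - 2)) := by
  have h96 : (96 : ℝ) * √3 ≠ 0 := by positivity
  have hq₁ : 3 * q - 1 ≠ 0 ↔ q ≠ 1 / 3 := not_congr ⟨fun h => by linarith, fun h => by linarith⟩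
  have hq₂ : 3 * q - 2 ≠ 0 ↔ q ≠ 2 / 3 := not_congr ⟨fun h => by linarith, fun h => by linarith⟩
  have hd₁ : 3 * q - 1 = 0 → 2 * q - 1 ≠ 0 := fun h h' => by linarith
  have hd₂ : 3 * q - 2 = 0 → q - 1 ≠ 0 := fun h h' => by linarith
  refine (Complex.div_norm_pow_two_mul_eq_iff (zq_ne_zero q) (zq_ne_zero q') 3).trans ?_
  rw [im_zq_mul_conj_zq_pow_three, mul_eq_zero, or_iff_right h96, mul_eq_zero, mul_eq_zero,
    sub_eq_zero, sub_eq_zero, sub_eq_zero, mul_eq_iff_ne_zero_and_eq_div hd₁,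
    mul_eq_iff_ne_zero_and_eq_div hd₂, hq₁, hq₂, eq_comm, or_assoc]
end

section
/- For real numbers q and q', the composition of the rotations by 6·arg(-1+(1-2q)√3 i) and 6·arg(-1+(1-2q')√3 i) equals the rotation by 6·arg(-1+(1-2q'')√3 i), where q'' = (3qq' - 2(q+q') + 1)/(6qq' - 3(q+q') + 1), provided 6qq' - 3(q+q') + 1 ≠ 0. -/
open Complex Real

/-!
Up to the real factor `2 (6qq' - 3(q + q') + 1)`, the product `zq q * zq q'` is `zq q''`.
A nonzero real factor changes the unit vector `z / ‖z‖` at most by a sign, which an even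
power kills.
-/

theorem Complex.ofReal_mul_div_norm_pow_of_even {r : ℝ} (hr : r ≠ 0) (z : ℂ) {n : ℕ}
    (hn : Even n) : ((r : ℂ) * z / (‖(r : ℂ) * z‖ : ℂ)) ^ n = (z / (‖z‖ : ℂ)) ^ n := by
  have hsign : ((r : ℂ) / ((|r| : ℝ) : ℂ)) ^ n = 1 := by
    norm_cast
    rw [div_pow, hn.pow_abs, div_self (pow_ne_zero n hr)]
  rw [norm_mul, Complex.norm_real, Real.norm_eq_abs, ofReal_mul, mul_div_mul_comm, mul_pow,
    hsign, one_mul]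

theorem zq_mul_zq (q q' : ℝ) :
    zq q * zq q' = 2 * (-((6 * q * q' - 3 * (q + q') + 1 : ℝ) : ℂ) +
      ((q + q' - 1 : ℝ) : ℂ) * (Real.sqrt 3 : ℂ) * I) := by
  have h3 : (Real.sqrt 3 : ℂ) ^ 2 = 3 := by
    rw [← ofReal_pow, Real.sq_sqrt (by norm_num : (0 : ℝ) ≤ 3)]
    norm_num
  simp only [zq]
  push_cast
  linear_combination ((1 - 2 * (q : ℂ)) * (1 - 2 * (q' : ℂ)) * I ^ 2) * h3 +
    (3 * (1 - 2 * (q : ℂ)) * (1 - 2 * (q' : ℂ))) * I_sq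

theorem ofReal_mul_zq_div {a b : ℝ} (hb : b ≠ 0) :
    (b : ℂ) * zq (a / b) = -(b : ℂ) + ((b - 2 * a : ℝ) : ℂ) * (Real.sqrt 3 : ℂ) * I := by
  have hb' : (b : ℂ) ≠ 0 := ofReal_ne_zero.mpr hb
  simp only [zq]
  push_cast
  field_simp

theorem stmt5 (q q' : ℝ) (h : 6 * q * q' - 3 * (q + q') + 1 ≠ 0) :
    ((zq q * zq q') / (‖zq q * zq q'‖ : ℝ)) ^ 6 =
      (zq ((3 * q * q' - 2 * (q + q') + 1) / (6 * q * q' - 3 * (q + q') + 1)) /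
        (‖zq ((3 * q * q' - 2 * (q + q') + 1) / (6 * q * q' - 3 * (q + q') + 1))‖ : ℝ)) ^ 6 := by
  set D : ℝ := 6 * q * q' - 3 * (q + q') + 1
  set N : ℝ := 3 * q * q' - 2 * (q + q') + 1
  have hprod : zq q * zq q' = ((2 * D : ℝ) : ℂ) * zq (N / D) := by
    rw [ofReal_mul, mul_assoc, ofReal_mul_zq_div h, zq_mul_zq]
    simp only [D, N]
    push_cast
    ring
  rw [hprod, ofReal_mul_div_norm_pow_of_even (mul_ne_zero two_ne_zero h) _ (by decide)]
end

section
/- Let Δ_{ab} be the triangle with side lengths 1, a, b (in anti-clockwise order) and Δ_{ba} its mirror image. If q = (1-a²)/(b² + 1 - 2a²) (assuming b² + 1 - 2a² ≠ 0), then tan(arg(-1 + (1-2q)√3 i)) = √3(b²-1)/(2a²-b²-1), i.e. -(1-2q)√3 = √3(b²-1)/(2a²-b²-1); consequently the rotation angle 6·arg(-1+(1-2q)√3 i) is congruent mod 2π to 6θ where tan θ = √3(b²-1)/(2a²-b²-1), and T_q maps [Δ_{ab}] to [Δ_{ba}]. -/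
/-!
With `q = (1 - a²)/(b² + 1 - 2a²)` one has `(2q - 1) = (b² - 1)/(2a² - b² - 1)`, so the point
`z = -1 + (1 - 2q)√3 i` has `tan (arg z) = im z / re z` equal to the prescribed value. Two angles
with nonvanishing cosine and the same tangent differ by a multiple of `π`, hence agree after
multiplication by any even integer; in particular `(z/‖z‖)⁶ = exp (6 i arg z) = exp (6 i θ)`.
-/

open Complex Real

lemma neg_one_sub_two_mul_div_eq {a b : ℝ} (hden : b ^ 2 + 1 - 2 * a ^ 2 ≠ 0) :
    -(1 - 2 * ((1 - a ^ 2) / (b ^ 2 + 1 - 2 * a ^ 2))) = (b ^ 2 - 1) / (2 * a ^ 2 - b ^ 2 - 1) := by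
  have hden' : 2 * a ^ 2 - b ^ 2 - 1 ≠ 0 := fun h => hden (by linarith)
  field_simp
  ring

lemma Real.sin_sub_eq_zero_of_tan_eq {θ φ : ℝ} (hθ : Real.cos θ ≠ 0) (hφ : Real.cos φ ≠ 0)
    (h : Real.tan θ = Real.tan φ) : Real.sin (θ - φ) = 0 := by
  rw [Real.tan_eq_sin_div_cos, Real.tan_eq_sin_div_cos, div_eq_div_iff hθ hφ] at h
  rw [Real.sin_sub]
  linarith

lemma Complex.exp_two_mul_nat_mul_I_eq_of_tan_eq {θ φ : ℝ} (n : ℕ) (hθ : Real.cos θ ≠ 0)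
    (hφ : Real.cos φ ≠ 0) (h : Real.tan θ = Real.tan φ) :
    Complex.exp (2 * n * θ * Complex.I) = Complex.exp (2 * n * φ * Complex.I) := by
  obtain ⟨k, hk⟩ := Real.sin_eq_zero_iff.mp (Real.sin_sub_eq_zero_of_tan_eq hθ hφ h)
  have hθφ : (θ : ℂ) = φ + k * π := by
    rw [← sub_eq_iff_eq_add']
    exact_mod_cast hk.symm
  calc Complex.exp (2 * n * θ * Complex.I)
      = Complex.exp (2 * n * φ * Complex.I + (n * k : ℤ) * (2 * π * Complex.I)) := by
        rw [hθφ]; push_cast; ring_nf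
    _ = Complex.exp (2 * n * φ * Complex.I) := by
        rw [Complex.exp_add, Complex.exp_int_mul_two_pi_mul_I, mul_one]

lemma Complex.div_norm_pow_eq_exp {z : ℂ} (hz : z ≠ 0) (n : ℕ) :
    (z / (‖z‖ : ℂ)) ^ n = Complex.exp (n * z.arg * Complex.I) := by
  have hnorm : (‖z‖ : ℂ) ≠ 0 := by exact_mod_cast norm_ne_zero_iff.mpr hz
  have hunit : z / (‖z‖ : ℂ) = Complex.exp (z.arg * Complex.I) :=
    (div_eq_iff hnorm).mpr (by rw [mul_comm, Complex.norm_mul_exp_arg_mul_I])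
  rw [mul_assoc, Complex.exp_nat_mul, hunit]

theorem stmt15_general (a b q : ℝ)
    (hden : b ^ 2 + 1 - 2 * a ^ 2 ≠ 0)
    (hq : q = (1 - a ^ 2) / (b ^ 2 + 1 - 2 * a ^ 2)) :
    -(1 - 2 * q) * Real.sqrt 3 = Real.sqrt 3 * (b ^ 2 - 1) / (2 * a ^ 2 - b ^ 2 - 1) ∧
    Real.tan (Complex.arg (-1 + ((1 - 2 * q : ℝ) : ℂ) * (Real.sqrt 3 : ℂ) * Complex.I)) =
      Real.sqrt 3 * (b ^ 2 - 1) / (2 * a ^ 2 - b ^ 2 - 1) ∧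
    ∀ θ : ℝ, Real.cos θ ≠ 0 →
      Real.tan θ = Real.sqrt 3 * (b ^ 2 - 1) / (2 * a ^ 2 - b ^ 2 - 1) →
      ((-1 + ((1 - 2 * q : ℝ) : ℂ) * (Real.sqrt 3 : ℂ) * Complex.I) /
          (‖(-1 + ((1 - 2 * q : ℝ) : ℂ) * (Real.sqrt 3 : ℂ) * Complex.I)‖ : ℝ)) ^ 6 =
        Complex.exp (6 * (θ : ℂ) * Complex.I) := by
  have hslope : -(1 - 2 * q) * Real.sqrt 3 = Real.sqrt 3 * (b ^ 2 - 1) / (2 * a ^ 2 - b ^ 2 - 1) := by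
    rw [hq, neg_mul, ← neg_mul, neg_one_sub_two_mul_div_eq hden]
    ring
  set z : ℂ := -1 + ((1 - 2 * q : ℝ) : ℂ) * (Real.sqrt 3 : ℂ) * Complex.I
  have hre : z.re = -1 := by simp [z]
  have hz : z ≠ 0 := fun h => by simp [h] at hre
  have htan : Real.tan z.arg = Real.sqrt 3 * (b ^ 2 - 1) / (2 * a ^ 2 - b ^ 2 - 1) := by
    rw [Complex.tan_arg, hre, ← hslope]
    simp [z, div_neg]
    ring
  have hcos : Real.cos z.arg ≠ 0 := by
    rw [Complex.cos_arg hz, hre]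
    simpa using hz
  refine ⟨hslope, htan, fun θ hθ htanθ => ?_⟩
  have h6 := Complex.exp_two_mul_nat_mul_I_eq_of_tan_eq 3 hcos hθ (htan.trans htanθ.symm)
  rw [Complex.div_norm_pow_eq_exp hz]
  norm_num at h6 ⊢
  exact h6

theorem stmt15 (a b q : ℝ) (ha : 0 < a) (hb : 0 < b)
    (hden : b ^ 2 + 1 - 2 * a ^ 2 ≠ 0)
    (hq : q = (1 - a ^ 2) / (b ^ 2 + 1 - 2 * a ^ 2)) :
    -(1 - 2 * q) * Real.sqrt 3 = Real.sqrt 3 * (b ^ 2 - 1) / (2 * a ^ 2 - b ^ 2 - 1) ∧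
    Real.tan (Complex.arg (-1 + ((1 - 2 * q : ℝ) : ℂ) * (Real.sqrt 3 : ℂ) * Complex.I)) =
      Real.sqrt 3 * (b ^ 2 - 1) / (2 * a ^ 2 - b ^ 2 - 1) ∧
    ∀ θ : ℝ, Real.cos θ ≠ 0 →
      Real.tan θ = Real.sqrt 3 * (b ^ 2 - 1) / (2 * a ^ 2 - b ^ 2 - 1) →
      ((-1 + ((1 - 2 * q : ℝ) : ℂ) * (Real.sqrt 3 : ℂ) * Complex.I) /
          (‖(-1 + ((1 - 2 * q : ℝ) : ℂ) * (Real.sqrt 3 : ℂ) * Complex.I)‖ : ℝ)) ^ 6 =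
        Complex.exp (6 * (θ : ℂ) * Complex.I) :=
  stmt15_general a b q hden hq
end

section
/- Let θ be real with -2π/3 < θ < 2π/3, let n be an integer with θ/2 + nπ/3 ∈ (π/2, 3π/2) mod 2π, and set q = (1/2)(1 + (1/√3)·tan(θ/2 + nπ/3)). Then -1 + (1-2q)√3·i = -1 - i·tan(θ/2 + nπ/3), and 6·arg(-1 + (1-2q)√3·i) ≡ 3θ (mod 2π). -/
/-!
With φ = θ/2 + nπ/3, the choice of q makes (1 - 2q)√3 = -tan φ. The condition on n says
cos φ < 0, so -1 - i tan φ = (-1/cos φ)·e^{iφ} is a positive multiple of e^{iφ}; its sixth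
normalized power is e^{6iφ} = e^{3iθ}·e^{2πin} = e^{3iθ}.
-/

open Complex Real

theorem Real.cos_neg_of_add_two_pi_mul_mem_Ioo {φ : ℝ} {k : ℤ}
    (hk : φ + 2 * π * k ∈ Set.Ioo (π / 2) (3 * π / 2)) : Real.cos φ < 0 := by
  have h := Real.cos_neg_of_pi_div_two_lt_of_lt hk.1 (by linarith [hk.2])
  rwa [show φ + 2 * π * k = φ + k * (2 * π) by ring, Real.cos_add_int_mul_two_pi] at h

theorem Complex.neg_one_sub_I_mul_tan_eq {φ : ℝ} (hφ : Real.cos φ ≠ 0) :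
    (-1 - I * (Real.tan φ : ℂ)) = ((-1 / Real.cos φ : ℝ) : ℂ) * exp (φ * I) := by
  have hφ' : Complex.cos φ ≠ 0 := by exact_mod_cast hφ
  rw [exp_mul_I, Real.tan_eq_sin_div_cos]
  push_cast
  field_simp
  ring

theorem Complex.div_norm_neg_one_sub_I_mul_tan {φ : ℝ} (hφ : Real.cos φ < 0) :
    (-1 - I * (Real.tan φ : ℂ)) / (‖-1 - I * (Real.tan φ : ℂ)‖ : ℂ) = exp (φ * I) := by
  have hr : 0 < -1 / Real.cos φ := div_pos_of_neg_of_neg (by norm_num) hφ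
  have hr' : ((-1 / Real.cos φ : ℝ) : ℂ) ≠ 0 := by exact_mod_cast hr.ne'
  rw [neg_one_sub_I_mul_tan_eq hφ.ne, norm_mul, norm_exp_ofReal_mul_I, mul_one, norm_real,
    Real.norm_of_nonneg hr.le, mul_div_cancel_left₀ _ hr']

theorem stmt19_general (θ : ℝ)
    (n : ℤ) (hn : ∃ k : ℤ, θ / 2 + n * Real.pi / 3 + 2 * Real.pi * k ∈
      Set.Ioo (Real.pi / 2) (3 * Real.pi / 2))
    (q : ℝ) (hq : q = (1 / 2) * (1 + (1 / Real.sqrt 3) * Real.tan (θ / 2 + n * Real.pi / 3))) :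
    (-1 + ((1 - 2 * q : ℝ) : ℂ) * (Real.sqrt 3 : ℂ) * Complex.I =
      -1 - Complex.I * (Real.tan (θ / 2 + n * Real.pi / 3) : ℝ)) ∧
    ((-1 + ((1 - 2 * q : ℝ) : ℂ) * (Real.sqrt 3 : ℂ) * Complex.I) /
        (‖-1 + ((1 - 2 * q : ℝ) : ℂ) * (Real.sqrt 3 : ℂ) * Complex.I‖ : ℝ)) ^ 6 =
      Complex.exp (3 * (θ : ℂ) * Complex.I) := by
  set φ := θ / 2 + n * π / 3 with hφ
  obtain ⟨k, hk⟩ := hn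
  have hcoeff : (1 - 2 * q) * √3 = -Real.tan φ := by
    rw [hq]
    field_simp
    ring
  have hz : -1 + ((1 - 2 * q : ℝ) : ℂ) * (√3 : ℂ) * I = -1 - I * (Real.tan φ : ℂ) := by
    rw [← ofReal_mul, hcoeff, ofReal_neg]
    ring
  refine ⟨hz, ?_⟩
  have hsix_mul : 6 * ((φ : ℂ) * I) = 3 * θ * I + n * (2 * π * I) := by
    rw [hφ]; push_cast; ring
  rw [hz, div_norm_neg_one_sub_I_mul_tan (Real.cos_neg_of_add_two_pi_mul_mem_Ioo hk),
    ← Complex.exp_nat_mul, Nat.cast_ofNat, hsix_mul, Complex.exp_add, exp_int_mul_two_pi_mul_I, mul_one]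

theorem stmt19 (θ : ℝ) (hθ₁ : -(2 * Real.pi / 3) < θ) (hθ₂ : θ < 2 * Real.pi / 3)
    (n : ℤ) (hn : ∃ k : ℤ, θ / 2 + n * Real.pi / 3 + 2 * Real.pi * k ∈
      Set.Ioo (Real.pi / 2) (3 * Real.pi / 2))
    (q : ℝ) (hq : q = (1 / 2) * (1 + (1 / Real.sqrt 3) * Real.tan (θ / 2 + n * Real.pi / 3))) :
    (-1 + ((1 - 2 * q : ℝ) : ℂ) * (Real.sqrt 3 : ℂ) * Complex.I =
      -1 - Complex.I * (Real.tan (θ / 2 + n * Real.pi / 3) : ℝ)) ∧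
    ((-1 + ((1 - 2 * q : ℝ) : ℂ) * (Real.sqrt 3 : ℂ) * Complex.I) /
        (‖-1 + ((1 - 2 * q : ℝ) : ℂ) * (Real.sqrt 3 : ℂ) * Complex.I‖ : ℝ)) ^ 6 =
      Complex.exp (3 * (θ : ℂ) * Complex.I) :=
  stmt19_general θ n hn q hq
end
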